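/- arXiv:2603.22364 — 5 statements merged into one kernel-verified Lean document; each statement's English description precedes it below -/
import Mathlib

section
/- Let K ⊆ ℝ^d be a measurable set with finite positive Lebesgue measure |K|, let h : ℝ^d → ℝ be Lebesgue-integrable with h = 0 outside K, and let δ ∈ (0, 1/|K|). Suppose λ* > 0 satisfies ∫_K max{h(x)/λ*, δ} dx = 1, and define p*(x) = max{h(x)/λ*, δ} for x ∈ K and p*(x) = 0 for x ∉ K, with h·log p* Lebesgue-integrable on K. Then for every measurable q : ℝ^d → ℝ with q(x) ≥ δ for all x ∈ K, q(x) = 0 for x ∉ K, ∫_{ℝ^d} q(x) dx = 1, and h·log q Lebesgue-integrable on K, one has ∫_K h(x) log q(x) dx ≤ ∫_K h(x) log p*(x) dx. -/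
open MeasureTheory Real Classical

/-!
Pointwise, `p* = max (h/λ*) δ` maximises the Lagrangian `q ↦ h log q - λ* q` over `q ≥ δ`:
where `p* > δ` it is the stationary point `h = λ* p*`, and where `p* = δ` we have `h ≤ λ* δ`
while `log (q/δ) ≥ 0`. Hence `h log q ≤ h log p* + λ* (q - p*)` on `K`, and integrating over `K`
kills the multiplier term because `q` and `p*` both have mass one there.
-/

theorem mul_log_div_le_sub {p q : ℝ} (hp : 0 < p) (hq : 0 < q) : p * log (q / p) ≤ q - p :=
  calc p * log (q / p) ≤ p * (q / p - 1) :=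
        mul_le_mul_of_nonneg_left (log_le_sub_one_of_pos (div_pos hq hp)) hp.le
    _ = q - p := by field_simp

theorem mul_log_le_mul_log_max_div_add_mul_sub {a lam δ q : ℝ} (hlam : 0 < lam) (hδ : 0 < δ)
    (hq : δ ≤ q) :
    a * log q ≤ a * log (max (a / lam) δ) + lam * (q - max (a / lam) δ) := by
  set p := max (a / lam) δ with hp_def
  have hp : 0 < p := hδ.trans_le (le_max_right _ _)
  have hq' : 0 < q := hδ.trans_le hq
  have hmul : a * log (q / p) ≤ lam * p * log (q / p) := by
    rcases le_or_gt δ (a / lam) with hstat | hclip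
    · rw [hp_def, max_eq_left hstat, mul_div_cancel₀ a hlam.ne']
    · have hlog : 0 ≤ log (q / p) := by
        rw [hp_def, max_eq_right hclip.le]
        exact log_nonneg ((one_le_div hδ).2 hq)
      have ha : a ≤ lam * p := by
        rw [hp_def, max_eq_right hclip.le, mul_comm]
        exact ((div_lt_iff₀ hlam).1 hclip).le
      exact mul_le_mul_of_nonneg_right ha hlog
  calc a * log q = a * log p + a * log (q / p) := by
        rw [log_div hq'.ne' hp.ne']; ring
    _ ≤ a * log p + lam * (p * log (q / p)) := by linarith
    _ ≤ a * log p + lam * (q - p) := by gcongr; exact mul_log_div_le_sub hp hq'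

theorem setIntegral_le_of_le_add_mul_sub {α : Type*} [MeasurableSpace α] {μ : Measure α}
    {s : Set α} (hs : MeasurableSet s) {f g u v : α → ℝ} {c : ℝ}
    (hf : IntegrableOn f s μ) (hg : IntegrableOn g s μ) (hu : IntegrableOn u s μ)
    (hv : IntegrableOn v s μ) (huv : ∫ x in s, u x ∂μ = ∫ x in s, v x ∂μ)
    (hle : ∀ x ∈ s, f x ≤ g x + c * (u x - v x)) :
    ∫ x in s, f x ∂μ ≤ ∫ x in s, g x ∂μ := by
  have hpen : IntegrableOn (fun x => c * (u x - v x)) s μ := (hu.sub hv).const_mul c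
  calc ∫ x in s, f x ∂μ ≤ ∫ x in s, g x + c * (u x - v x) ∂μ :=
        setIntegral_mono_on hf (hg.add hpen) hs hle
    _ = ∫ x in s, g x ∂μ := by
        rw [integral_add hg hpen, integral_const_mul, integral_sub hu hv, huv, sub_self,
          mul_zero, add_zero]

theorem mclr_optimal_solution_general {d : ℕ}
    (K : Set (Fin d → ℝ)) (hKmeas : MeasurableSet K)
    (h : (Fin d → ℝ) → ℝ)
    (δ : ℝ) (hδpos : 0 < δ)
    (lam : ℝ) (hlam : 0 < lam)
    (hnorm : ∫ x in K, max (h x / lam) δ = 1)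
    (pstar : (Fin d → ℝ) → ℝ)
    (hpstar : ∀ x, pstar x = if x ∈ K then max (h x / lam) δ else 0)
    (hpstarlog : IntegrableOn (fun x => h x * Real.log (pstar x)) K)
    (q : (Fin d → ℝ) → ℝ)
    (hqδ : ∀ x ∈ K, δ ≤ q x) (hq0 : ∀ x ∉ K, q x = 0)
    (hqnorm : ∫ x, q x = 1)
    (hqlog : IntegrableOn (fun x => h x * Real.log (q x)) K) :
    ∫ x in K, h x * Real.log (q x) ≤ ∫ x in K, h x * Real.log (pstar x) := by
  have hpK : ∀ x ∈ K, pstar x = max (h x / lam) δ := fun x hx => by rw [hpstar, if_pos hx]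
  -- A nonzero integral certifies integrability (the Bochner integral is `0` otherwise).
  have hqint : Integrable q := Integrable.of_integral_ne_zero (by simp [hqnorm])
  have hpint : IntegrableOn pstar K :=
    IntegrableOn.congr_fun (f := fun x => max (h x / lam) δ)
      (Integrable.of_integral_ne_zero (by simp [hnorm])) (fun x hx => (hpK x hx).symm) hKmeas
  have hmass : ∫ x in K, q x = ∫ x in K, pstar x := by
    rw [setIntegral_eq_integral_of_forall_compl_eq_zero hq0, hqnorm,
      setIntegral_congr_fun hKmeas hpK, hnorm]
  refine setIntegral_le_of_le_add_mul_sub hKmeas hqlog hpstarlog hqint.integrableOn hpint hmass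
    (c := lam) fun x hx => ?_
  rw [hpK x hx]
  exact mul_log_le_mul_log_max_div_add_mul_sub hlam hδpos (hqδ x hx)

/-- **MCLR optimal solution (paper's Theorem 1).**
Let `K ⊆ ℝ^d` be measurable with finite positive Lebesgue measure, `h` integrable with
`h = 0` outside `K`, `δ ∈ (0, 1/|K|)`, and `λ* > 0` with `∫_K max (h x / λ*) δ = 1`.
Define `p* x = max (h x / λ*) δ` on `K` and `0` elsewhere.  Then `p*` maximizes
`∫_K h (x) log q(x) dx` over all densities `q` with `q ≥ δ` on `K`, `q = 0` off `K`,
and `∫ q = 1`. -/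
theorem mclr_optimal_solution {d : ℕ}
    (K : Set (Fin d → ℝ)) (hKmeas : MeasurableSet K)
    (hKpos : 0 < volume K) (hKfin : volume K < ⊤)
    (h : (Fin d → ℝ) → ℝ) (hhint : Integrable h)
    (hhsupp : ∀ x ∉ K, h x = 0)
    (δ : ℝ) (hδpos : 0 < δ) (hδlt : δ < 1 / (volume K).toReal)
    (lam : ℝ) (hlam : 0 < lam)
    (hnorm : ∫ x in K, max (h x / lam) δ = 1)
    (pstar : (Fin d → ℝ) → ℝ)
    (hpstar : ∀ x, pstar x = if x ∈ K then max (h x / lam) δ else 0)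
    (hpstarlog : IntegrableOn (fun x => h x * Real.log (pstar x)) K)
    (q : (Fin d → ℝ) → ℝ) (hqmeas : Measurable q)
    (hqδ : ∀ x ∈ K, δ ≤ q x) (hq0 : ∀ x ∉ K, q x = 0)
    (hqnorm : ∫ x, q x = 1)
    (hqlog : IntegrableOn (fun x => h x * Real.log (q x)) K) :
    ∫ x in K, h x * Real.log (q x) ≤ ∫ x in K, h x * Real.log (pstar x) :=
  mclr_optimal_solution_general K hKmeas h δ hδpos lam hlam hnorm pstar hpstar hpstarlog q hqδ hq0
    hqnorm hqlog
end

section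
/- Let μ be a σ-finite measure on a measurable space X, let p₁ and p₂ be strictly positive probability densities with respect to μ, and let σ(w) = 1/(1+e^{−w}) denote the sigmoid function. Define r*(x) = log(p₁(x)/p₂(x)). Then for every measurable function r : X → ℝ, ∫∫ log σ(r(x) − r(y)) p₁(x) p₂(y) dμ(x) dμ(y) ≤ ∫∫ log σ(r*(x) − r*(y)) p₁(x) p₂(y) dμ(x) dμ(y), where both double integrals take values in [−∞, 0]. -/
open MeasureTheory Real ENNReal

/-- The sigmoid function `σ(w) = 1/(1 + e^{-w})`. -/
noncomputable def sigmoid (w : ℝ) : ℝ := 1 / (1 + Real.exp (-w))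

/-!
Pairing the term at `(x, y)` with the term at `(y, x)`, the objective becomes the integral of a
binary logistic loss `P · (-log σ(u)) + Q · (-log σ(-u))` with weights `P = p₁ x p₂ y`,
`Q = p₁ y p₂ x` and margin `u = r x - r y`. By Gibbs' inequality this loss is minimal when
`σ(u) = P / (P + Q)`, i.e. `u = log (P / Q) = r* x - r* y`. Since the swap preserves `μ ⊗ μ`,
the pointwise inequality between symmetrized integrands integrates to the claim.
-/

theorem sigmoid_eq_real_sigmoid : _root_.sigmoid = Real.sigmoid := by
  ext w
  rw [_root_.sigmoid, Real.sigmoid_def, one_div]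

theorem neg_log_sigmoid_nonneg (w : ℝ) : 0 ≤ -Real.log (Real.sigmoid w) :=
  neg_nonneg.mpr (log_nonpos (Real.sigmoid_nonneg w) (Real.sigmoid_le_one w))

theorem sigmoid_log_div {p q : ℝ} (hp : 0 < p) (hq : 0 < q) :
    Real.sigmoid (Real.log (p / q)) = p / (p + q) := by
  rw [Real.sigmoid_def, exp_neg, exp_log (div_pos hp hq)]
  field_simp

theorem mul_log_div_le_sub_s7 {a b : ℝ} (ha : 0 < a) (hb : 0 < b) : a * Real.log (b / a) ≤ b - a :=
  calc a * Real.log (b / a) ≤ a * (b / a - 1) :=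
        mul_le_mul_of_nonneg_left (log_le_sub_one_of_pos (div_pos hb ha)) ha.le
    _ = b - a := by field_simp

theorem mul_log_add_mul_log_one_sub_le {p q s : ℝ} (hp : 0 < p) (hq : 0 < q) (hs₀ : 0 < s)
    (hs₁ : s < 1) :
    p * Real.log s + q * Real.log (1 - s) ≤
      p * Real.log (p / (p + q)) + q * Real.log (q / (p + q)) := by
  have hpq : 0 < p + q := add_pos hp hq
  have hs : 0 < 1 - s := sub_pos.mpr hs₁
  have h₁ := mul_log_div_le_sub_s7 hp (mul_pos hs₀ hpq)
  have h₂ := mul_log_div_le_sub_s7 hq (mul_pos hs hpq)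
  rw [log_div (by positivity) hp.ne', log_mul hs₀.ne' hpq.ne'] at h₁
  rw [log_div (by positivity) hq.ne', log_mul hs.ne' hpq.ne'] at h₂
  rw [log_div hp.ne' hpq.ne', log_div hq.ne' hpq.ne']
  linear_combination h₁ + h₂

theorem logistic_loss_log_div_le {p q : ℝ} (hp : 0 < p) (hq : 0 < q) (u : ℝ) :
    p * -Real.log (Real.sigmoid (Real.log (p / q))) +
        q * -Real.log (Real.sigmoid (-Real.log (p / q))) ≤
      p * -Real.log (Real.sigmoid u) + q * -Real.log (Real.sigmoid (-u)) := by
  have hq' : 1 - p / (p + q) = q / (p + q) := by field_simp; ring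
  rw [Real.sigmoid_neg, Real.sigmoid_neg, sigmoid_log_div hp hq, hq']
  linear_combination
    mul_log_add_mul_log_one_sub_le hp hq (Real.sigmoid_pos u) (Real.sigmoid_lt_one u)

theorem pair_logistic_loss_log_ratio_le {a b c d : ℝ} (ha : 0 < a) (hb : 0 < b) (hc : 0 < c)
    (hd : 0 < d) (u v : ℝ) :
    a * d * -Real.log (Real.sigmoid (Real.log (a / b) - Real.log (c / d))) +
        c * b * -Real.log (Real.sigmoid (Real.log (c / d) - Real.log (a / b))) ≤
      a * d * -Real.log (Real.sigmoid (u - v)) + c * b * -Real.log (Real.sigmoid (v - u)) := by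
  have hratio : Real.log (a / b) - Real.log (c / d) = Real.log (a * d / (c * b)) := by
    rw [← log_div (by positivity) (by positivity)]
    congr 1
    field_simp
  rw [← neg_sub (Real.log (a / b)), ← neg_sub u, hratio]
  exact logistic_loss_log_div_le (mul_pos ha hd) (mul_pos hc hb) (u - v)

theorem lintegral_prod_self_le_of_add_swap_le {α : Type*} [MeasurableSpace α] {μ : Measure α}
    [SFinite μ] {F G : α × α → ℝ≥0∞} (hG : AEMeasurable G (μ.prod μ))
    (h : ∀ z, F z + F z.swap ≤ G z + G z.swap) :
    ∫⁻ z, F z ∂μ.prod μ ≤ ∫⁻ z, G z ∂μ.prod μ := by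
  have h₂ : 2 * ∫⁻ z, F z ∂μ.prod μ ≤ 2 * ∫⁻ z, G z ∂μ.prod μ :=
    calc 2 * ∫⁻ z, F z ∂μ.prod μ
        = ∫⁻ z, F z ∂μ.prod μ + ∫⁻ z, F z.swap ∂μ.prod μ := by
          rw [lintegral_prod_swap, two_mul]
      _ ≤ ∫⁻ z, F z + F z.swap ∂μ.prod μ := le_lintegral_add _ _
      _ ≤ ∫⁻ z, G z + G z.swap ∂μ.prod μ := lintegral_mono h
      _ = 2 * ∫⁻ z, G z ∂μ.prod μ := by
          rw [lintegral_add_left' hG, lintegral_prod_swap, two_mul]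
  exact (ENNReal.mul_le_mul_iff_right two_ne_zero ofNat_ne_top).mp h₂

theorem bt_reward_optimal_general {X : Type*} [MeasurableSpace X] (μ : Measure X) [SigmaFinite μ]
    (p₁ p₂ : X → ℝ) (hp₁m : Measurable p₁) (hp₂m : Measurable p₂)
    (hp₁pos : ∀ x, 0 < p₁ x) (hp₂pos : ∀ x, 0 < p₂ x)
    (rstar : X → ℝ) (hrstar : ∀ x, rstar x = Real.log (p₁ x / p₂ x))
    (r : X → ℝ) (hrm : Measurable r) :
    ∫⁻ x, ∫⁻ y,
        ENNReal.ofReal (p₁ x * p₂ y * (-(Real.log (_root_.sigmoid (rstar x - rstar y))))) ∂μ ∂μ ≤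
      ∫⁻ x, ∫⁻ y,
        ENNReal.ofReal (p₁ x * p₂ y * (-(Real.log (_root_.sigmoid (r x - r y))))) ∂μ ∂μ := by
  set L : (X → ℝ) → X × X → ℝ≥0∞ := fun f z =>
    ENNReal.ofReal (p₁ z.1 * p₂ z.2 * -Real.log (Real.sigmoid (f z.1 - f z.2))) with hL
  have hrstarm : Measurable rstar := by
    rw [funext hrstar]
    exact (hp₁m.div hp₂m).log
  have hLm : ∀ f, Measurable f → Measurable (L f) := fun f hf => by fun_prop
  have hLswap : ∀ z, L rstar z + L rstar z.swap ≤ L r z + L r z.swap := by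
    rintro ⟨x, y⟩
    have hnonneg : ∀ u v w, 0 < u → 0 < v → 0 ≤ u * v * -Real.log (Real.sigmoid w) :=
      fun u v w hu hv => mul_nonneg (mul_pos hu hv).le (neg_log_sigmoid_nonneg w)
    simp only [hL, Prod.swap_prod_mk]
    rw [← ofReal_add (hnonneg _ _ _ (hp₁pos x) (hp₂pos y)) (hnonneg _ _ _ (hp₁pos y) (hp₂pos x)),
      ← ofReal_add (hnonneg _ _ _ (hp₁pos x) (hp₂pos y)) (hnonneg _ _ _ (hp₁pos y) (hp₂pos x)),
      hrstar x, hrstar y]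
    exact ofReal_le_ofReal (pair_logistic_loss_log_ratio_le (hp₁pos x) (hp₂pos x) (hp₁pos y)
      (hp₂pos y) (r x) (r y))
  simp only [sigmoid_eq_real_sigmoid]
  rw [← lintegral_prod (L rstar) (hLm rstar hrstarm).aemeasurable,
    ← lintegral_prod (L r) (hLm r hrm).aemeasurable]
  exact lintegral_prod_self_le_of_add_swap_le (hLm r hrm).aemeasurable hLswap

/-- **Optimal reward for the Bradley–Terry preference objective (step in the paper's
Theorem 2).**  With positive densities `p₁, p₂`, the objective
`∬ log σ(r x - r y) p₁(x) p₂(y) dμ dμ`, which takes values in `[-∞, 0]`, is maximized by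
the log-likelihood ratio `r*(x) = log (p₁ x / p₂ x)`.  Since the integrands are
nonpositive, the inequality is stated equivalently via the Lebesgue integrals of
their negations (valued in `[0, ∞]`), with the inequality reversed. -/
theorem bt_reward_optimal {X : Type*} [MeasurableSpace X] (μ : Measure X) [SigmaFinite μ]
    (p₁ p₂ : X → ℝ) (hp₁m : Measurable p₁) (hp₂m : Measurable p₂)
    (hp₁pos : ∀ x, 0 < p₁ x) (hp₂pos : ∀ x, 0 < p₂ x)
    (hp₁i : Integrable p₁ μ) (hp₂i : Integrable p₂ μ)
    (hp₁1 : ∫ x, p₁ x ∂μ = 1) (hp₂1 : ∫ x, p₂ x ∂μ = 1)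
    (rstar : X → ℝ) (hrstar : ∀ x, rstar x = Real.log (p₁ x / p₂ x))
    (r : X → ℝ) (hrm : Measurable r) :
    ∫⁻ x, ∫⁻ y,
        ENNReal.ofReal (p₁ x * p₂ y * (-(Real.log (_root_.sigmoid (rstar x - rstar y))))) ∂μ ∂μ ≤
      ∫⁻ x, ∫⁻ y,
        ENNReal.ofReal (p₁ x * p₂ y * (-(Real.log (_root_.sigmoid (r x - r y))))) ∂μ ∂μ :=
  bt_reward_optimal_general μ p₁ p₂ hp₁m hp₂m hp₁pos hp₂pos rstar hrstar r hrm
end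

section
/- Let μ be a σ-finite measure on a measurable space X, let p_c and p_u be strictly positive probability densities with respect to μ, and let β > 0. Suppose C = ∫ p_c(x)^{1−1/β} p_u(x)^{1/β} dμ(x) is finite and define p_ref(x) = p_c(x)^{1−1/β} p_u(x)^{1/β} / C. Then the gamma-powered distribution p*(x) = p_ref(x)·(p_c(x)/p_u(x))^{1/β} / Z̃, with Z̃ = ∫ p_ref(x)(p_c(x)/p_u(x))^{1/β} dμ(x), equals p_c μ-almost everywhere. -/
open MeasureTheory Real

/-- **Paper's Corollary 2 (CC-DPO recovers the ground truth under the gamma-powered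
error model).**  If the base model is `p_ref = p_c^{1-1/β} p_u^{1/β} / C` with
normalizer `C`, then the gamma-powered distribution
`p* = p_ref (p_c/p_u)^{1/β} / Z̃`, with `Z̃ = ∫ p_ref (p_c/p_u)^{1/β} dμ`, equals the
ground-truth conditional density `p_c` μ-almost everywhere. -/
theorem ccdpo_gamma_powered_error_recovery {X : Type*} [MeasurableSpace X]
    (μ : Measure X) [SigmaFinite μ]
    (pc pu : X → ℝ) (hpcm : Measurable pc) (hpum : Measurable pu)
    (hpcpos : ∀ x, 0 < pc x) (hpupos : ∀ x, 0 < pu x)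
    (hpci : Integrable pc μ) (hpui : Integrable pu μ)
    (hpc1 : ∫ x, pc x ∂μ = 1) (hpu1 : ∫ x, pu x ∂μ = 1)
    (β : ℝ) (hβ : 0 < β)
    (hCint : Integrable (fun x => pc x ^ (1 - 1 / β) * pu x ^ (1 / β)) μ)
    (C : ℝ) (hC : C = ∫ x, pc x ^ (1 - 1 / β) * pu x ^ (1 / β) ∂μ)
    (pref : X → ℝ)
    (hpref : ∀ x, pref x = pc x ^ (1 - 1 / β) * pu x ^ (1 / β) / C)
    (Zt : ℝ) (hZt : Zt = ∫ x, pref x * (pc x / pu x) ^ (1 / β) ∂μ)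
    (pstar : X → ℝ)
    (hpstar : ∀ x, pstar x = pref x * (pc x / pu x) ^ (1 / β) / Zt) :
    pstar =ᵐ[μ] pc := by
  -- μ is nonzero since ∫ pc = 1
  have hμ : μ ≠ 0 := by
    intro h
    rw [h, integral_zero_measure] at hpc1
    exact one_ne_zero hpc1.symm
  -- C > 0
  have hCpos : 0 < C := by
    rw [hC]
    rw [integral_pos_iff_support_of_nonneg
      (fun x => le_of_lt (mul_pos (rpow_pos_of_pos (hpcpos x) _)
        (rpow_pos_of_pos (hpupos x) _))) hCint]
    have hsupp : (Function.support fun x => pc x ^ (1 - 1 / β) * pu x ^ (1 / β))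
        = Set.univ := by
      ext x
      simp only [Function.mem_support, Set.mem_univ, iff_true]
      exact (mul_pos (rpow_pos_of_pos (hpcpos x) _)
        (rpow_pos_of_pos (hpupos x) _)).ne'
    rw [hsupp]
    simpa [Measure.measure_univ_pos] using hμ
  -- Key pointwise identity: pref x * (pc x / pu x) ^ (1/β) = pc x / C
  have hkey : ∀ x, pref x * (pc x / pu x) ^ (1 / β) = pc x / C := by
    intro x
    rw [hpref x, div_rpow (hpcpos x).le (hpupos x).le]
    have h1 : pc x ^ (1 - 1/β) * pc x ^ (1/β) = pc x := by
      rw [← rpow_add (hpcpos x)]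
      norm_num
    have h2 : pu x ^ (1/β) ≠ 0 := (rpow_pos_of_pos (hpupos x) _).ne'
    have h3 : pc x ^ (1 - 1/β) * pu x ^ (1/β) / C * (pc x ^ (1/β) / pu x ^ (1/β))
        = pc x ^ (1 - 1/β) * pc x ^ (1/β) * (pu x ^ (1/β) / pu x ^ (1/β)) / C := by
      ring
    rw [h3, div_self h2, h1, mul_one]
  -- hence Zt = 1/C
  have hZtval : Zt = 1 / C := by
    rw [hZt]
    simp only [hkey]
    rw [integral_div, hpc1]
  -- conclude pointwise
  refine Filter.Eventually.of_forall fun x => ?_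
  rw [hpstar x, hkey x, hZtval]
  field_simp
end

section
/- Let μ be a σ-finite measure on a measurable space X, let p_c and p_u be strictly positive probability densities with respect to μ, let λ > 0, and let σ(w) = 1/(1+e^{−w}) denote the sigmoid function. Define r*(x) = log(p_c(x)/p_u(x)) + log(1/λ). Then for every measurable function r : X → ℝ, ∫ log σ(r(x)) p_c(x) dμ(x) + λ ∫ log σ(−r(x)) p_u(x) dμ(x) ≤ ∫ log σ(r*(x)) p_c(x) dμ(x) + λ ∫ log σ(−r*(x)) p_u(x) dμ(x), where all integrals take values in [−∞, 0]; moreover any measurable maximizer equals r* μ-almost everywhere. -/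
/-!
Pointwise the integrand is `a log σ(w) + b log σ(−w)` with `a = p_c(x)`, `b = λ p_u(x)`.
With `s = σ(w)` and `p = σ(log (a/b)) = a/(a+b)`, applying `log y ≤ y − 1` to `s/p` and
`(1−s)/(1−p)` shows that it is maximal exactly at `s = p`, i.e. at `w = r*(x)` (two-point Gibbs
inequality); integrating gives the inequality. The optimal value is finite, since its integrand is
at most the one at `w = 0`, which is `(a + b) log 2`; so equality of the objectives forces a.e.
equality of the integrands, hence `r = r*` a.e.
-/

open MeasureTheory Real ENNReal

theorem Real.sigmoid_log_div {a b : ℝ} (ha : 0 < a) (hb : 0 < b) :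
    Real.sigmoid (Real.log (a / b)) = a / (a + b) := by
  rw [Real.sigmoid_def, Real.exp_neg, Real.exp_log (div_pos ha hb)]
  field_simp

theorem mul_log_add_mul_log_one_sub_lt {a b s : ℝ} (ha : 0 < a) (hb : 0 < b) (hs₀ : 0 < s)
    (hs₁ : s < 1) (hs : s ≠ a / (a + b)) :
    a * Real.log s + b * Real.log (1 - s)
      < a * Real.log (a / (a + b)) + b * Real.log (b / (a + b)) := by
  have hab : 0 < a + b := add_pos ha hb
  have hlt : Real.log (s / (a / (a + b))) < s / (a / (a + b)) - 1 :=
    Real.log_lt_sub_one_of_pos (by positivity) (by rwa [ne_eq, div_eq_one_iff_eq (by positivity)])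
  have hle : Real.log ((1 - s) / (b / (a + b))) ≤ (1 - s) / (b / (a + b)) - 1 :=
    Real.log_le_sub_one_of_pos (div_pos (by linarith) (by positivity))
  rw [Real.log_div hs₀.ne' (by positivity)] at hlt
  rw [Real.log_div (by linarith) (by positivity)] at hle
  have hsa : a * (s / (a / (a + b)) - 1) = (a + b) * s - a := by field_simp
  have hsb : b * ((1 - s) / (b / (a + b)) - 1) = (a + b) * (1 - s) - b := by field_simp
  nlinarith [mul_lt_mul_of_pos_left hlt ha, mul_le_mul_of_nonneg_left hle hb.le]

noncomputable def logisticLoss (a b w : ℝ) : ℝ :=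
  a * -Real.log (Real.sigmoid w) + b * -Real.log (Real.sigmoid (-w))

theorem logisticLoss_nonneg {a b : ℝ} (ha : 0 ≤ a) (hb : 0 ≤ b) (w : ℝ) :
    0 ≤ logisticLoss a b w :=
  add_nonneg (mul_nonneg ha (neg_log_sigmoid_nonneg w)) (mul_nonneg hb (neg_log_sigmoid_nonneg _))

theorem logisticLoss_zero (a b : ℝ) : logisticLoss a b 0 = (a + b) * Real.log 2 := by
  rw [logisticLoss, neg_zero, Real.sigmoid_zero, Real.log_inv]
  ring

theorem logisticLoss_eq (a b w : ℝ) :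
    logisticLoss a b w = -(a * Real.log (Real.sigmoid w) + b * Real.log (1 - Real.sigmoid w)) := by
  rw [logisticLoss, Real.sigmoid_neg]
  ring

theorem logisticLoss_log_div_lt {a b w : ℝ} (ha : 0 < a) (hb : 0 < b)
    (hw : w ≠ Real.log (a / b)) :
    logisticLoss a b (Real.log (a / b)) < logisticLoss a b w := by
  have hs : Real.sigmoid w ≠ a / (a + b) := by
    rwa [← Real.sigmoid_log_div ha hb, Ne, Real.sigmoid_inj]
  have hgibbs := mul_log_add_mul_log_one_sub_lt ha hb (Real.sigmoid_pos w)
    (Real.sigmoid_lt_one w) hs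
  have hb' : 1 - a / (a + b) = b / (a + b) := by field_simp; ring
  rw [logisticLoss_eq, logisticLoss_eq, Real.sigmoid_log_div ha hb, hb']
  linarith

theorem logisticLoss_log_div_le {a b : ℝ} (ha : 0 < a) (hb : 0 < b) (w : ℝ) :
    logisticLoss a b (Real.log (a / b)) ≤ logisticLoss a b w := by
  rcases eq_or_ne w (Real.log (a / b)) with rfl | hw
  · exact le_rfl
  · exact (logisticLoss_log_div_lt ha hb hw).le

theorem eq_log_div_of_logisticLoss_le {a b w : ℝ} (ha : 0 < a) (hb : 0 < b)
    (h : logisticLoss a b w ≤ logisticLoss a b (Real.log (a / b))) : w = Real.log (a / b) := by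
  by_contra hw
  exact (logisticLoss_log_div_lt ha hb hw).not_ge h

theorem Measurable.logisticLoss {X : Type*} [MeasurableSpace X] {f g s : X → ℝ}
    (hf : Measurable f) (hg : Measurable g) (hs : Measurable s) :
    Measurable fun x => logisticLoss (f x) (g x) (s x) := by
  have := _root_.continuous_sigmoid.measurable
  unfold _root_.logisticLoss
  fun_prop

theorem lintegral_ofReal_add_const_mul {X : Type*} [MeasurableSpace X] {μ : Measure X}
    {f g : X → ℝ} (hf : Measurable f) (hf₀ : ∀ x, 0 ≤ f x) (hg₀ : ∀ x, 0 ≤ g x)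
    {c : ℝ} (hc : 0 ≤ c) :
    ∫⁻ x, ENNReal.ofReal (f x) ∂μ + ENNReal.ofReal c * ∫⁻ x, ENNReal.ofReal (g x) ∂μ
      = ∫⁻ x, ENNReal.ofReal (f x + c * g x) ∂μ := by
  rw [← lintegral_const_mul' _ _ ofReal_ne_top, ← lintegral_add_left hf.ennreal_ofReal]
  refine lintegral_congr fun x => ?_
  rw [ENNReal.ofReal_add (hf₀ x) (mul_nonneg hc (hg₀ x)), ENNReal.ofReal_mul hc]

theorem lintegral_neg_log_sigmoid_eq_lintegral_logisticLoss {X : Type*} [MeasurableSpace X]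
    {μ : Measure X} {pc pu s : X → ℝ} (hpcm : Measurable pc) (hs : Measurable s)
    (hpc₀ : ∀ x, 0 ≤ pc x) (hpu₀ : ∀ x, 0 ≤ pu x) {lam : ℝ} (hlam : 0 ≤ lam) :
    ∫⁻ x, ENNReal.ofReal (pc x * (-(Real.log (_root_.sigmoid (s x))))) ∂μ
        + ENNReal.ofReal lam *
          ∫⁻ x, ENNReal.ofReal (pu x * (-(Real.log (_root_.sigmoid (-s x))))) ∂μ
      = ∫⁻ x, ENNReal.ofReal (logisticLoss (pc x) (lam * pu x) (s x)) ∂μ := by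
  have hf : Measurable fun x => pc x * -Real.log (Real.sigmoid (s x)) := by
    have := _root_.continuous_sigmoid.measurable
    fun_prop
  rw [sigmoid_eq_real_sigmoid, lintegral_ofReal_add_const_mul hf
    (fun x => mul_nonneg (hpc₀ x) (neg_log_sigmoid_nonneg _))
    (fun x => mul_nonneg (hpu₀ x) (neg_log_sigmoid_nonneg _)) hlam]
  simp only [logisticLoss, mul_assoc]

theorem cca_optimal_reward_general {X : Type*} [MeasurableSpace X]
    (μ : Measure X)
    (pc pu : X → ℝ) (hpcm : Measurable pc) (hpum : Measurable pu)
    (hpcpos : ∀ x, 0 < pc x) (hpupos : ∀ x, 0 < pu x)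
    (hpci : Integrable pc μ) (hpui : Integrable pu μ)
    (lam : ℝ) (hlam : 0 < lam)
    (rstar : X → ℝ)
    (hrstar : ∀ x, rstar x = Real.log (pc x / pu x) + Real.log (1 / lam))
    (r : X → ℝ) (hrm : Measurable r) :
    ((∫⁻ x, ENNReal.ofReal (pc x * (-(Real.log (_root_.sigmoid (rstar x))))) ∂μ
        + ENNReal.ofReal lam *
          ∫⁻ x, ENNReal.ofReal (pu x * (-(Real.log (_root_.sigmoid (-rstar x))))) ∂μ)
      ≤ (∫⁻ x, ENNReal.ofReal (pc x * (-(Real.log (_root_.sigmoid (r x))))) ∂μ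
        + ENNReal.ofReal lam *
          ∫⁻ x, ENNReal.ofReal (pu x * (-(Real.log (_root_.sigmoid (-r x))))) ∂μ)) ∧
      (((∫⁻ x, ENNReal.ofReal (pc x * (-(Real.log (_root_.sigmoid (r x))))) ∂μ
        + ENNReal.ofReal lam *
          ∫⁻ x, ENNReal.ofReal (pu x * (-(Real.log (_root_.sigmoid (-r x))))) ∂μ)
      = (∫⁻ x, ENNReal.ofReal (pc x * (-(Real.log (_root_.sigmoid (rstar x))))) ∂μ
        + ENNReal.ofReal lam *
          ∫⁻ x, ENNReal.ofReal (pu x * (-(Real.log (_root_.sigmoid (-rstar x))))) ∂μ)) →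
        r =ᵐ[μ] rstar) := by
  have hb x : 0 < lam * pu x := mul_pos hlam (hpupos x)
  obtain rfl : rstar = fun x => Real.log (pc x / (lam * pu x)) := funext fun x => by
    rw [hrstar, ← Real.log_mul (div_pos (hpcpos x) (hpupos x)).ne' (by positivity)]
    congr 1
    field_simp
  have hrstarm : Measurable fun x => Real.log (pc x / (lam * pu x)) := by fun_prop
  rw [lintegral_neg_log_sigmoid_eq_lintegral_logisticLoss hpcm hrm (fun x => (hpcpos x).le)
      (fun x => (hpupos x).le) hlam.le,
    lintegral_neg_log_sigmoid_eq_lintegral_logisticLoss hpcm hrstarm (fun x => (hpcpos x).le)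
      (fun x => (hpupos x).le) hlam.le]
  have hmin x : ENNReal.ofReal (logisticLoss (pc x) (lam * pu x) (Real.log (pc x / (lam * pu x))))
      ≤ ENNReal.ofReal (logisticLoss (pc x) (lam * pu x) (r x)) :=
    ENNReal.ofReal_le_ofReal (logisticLoss_log_div_le (hpcpos x) (hb x) _)
  refine ⟨lintegral_mono hmin, fun heq => ?_⟩
  have hfin : ∫⁻ x, ENNReal.ofReal
      (logisticLoss (pc x) (lam * pu x) (Real.log (pc x / (lam * pu x)))) ∂μ ≠ ∞ := by
    have hint := (hpci.add (hpui.const_mul lam)).mul_const (Real.log 2)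
    refine ne_top_of_le_ne_top hint.lintegral_lt_top.ne
      (lintegral_mono fun x => ENNReal.ofReal_le_ofReal ?_)
    exact (logisticLoss_log_div_le (hpcpos x) (hb x) 0).trans_eq (logisticLoss_zero _ _)
  filter_upwards [ae_eq_of_ae_le_of_lintegral_le (ae_of_all _ hmin) hfin
    ((hpcm.logisticLoss (hpum.const_mul lam) hrm).ennreal_ofReal.aemeasurable) heq.le] with x hx
  exact eq_log_div_of_logisticLoss_le (hpcpos x) (hb x)
    ((ENNReal.ofReal_le_ofReal_iff (logisticLoss_nonneg (hpcpos x).le (hb x).le _)).1 hx.ge)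

/-- **Optimal reward of the λ-weighted NCE objective (CCA analysis).**  With strictly
positive densities `p_c, p_u` and `λ > 0`, the objective
`∫ log σ(r) p_c dμ + λ ∫ log σ(−r) p_u dμ` (valued in `[-∞, 0]`) is maximized over
measurable rewards `r` by `r*(x) = log (p_c x / p_u x) + log (1/λ)`, and any measurable
maximizer equals `r*` μ-a.e.  Since the integrands are nonpositive, the objective is
stated via Lebesgue integrals of their negations (valued in `[0, ∞]`), reversed. -/
theorem cca_optimal_reward {X : Type*} [MeasurableSpace X]
    (μ : Measure X) [SigmaFinite μ]
    (pc pu : X → ℝ) (hpcm : Measurable pc) (hpum : Measurable pu)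
    (hpcpos : ∀ x, 0 < pc x) (hpupos : ∀ x, 0 < pu x)
    (hpci : Integrable pc μ) (hpui : Integrable pu μ)
    (hpc1 : ∫ x, pc x ∂μ = 1) (hpu1 : ∫ x, pu x ∂μ = 1)
    (lam : ℝ) (hlam : 0 < lam)
    (rstar : X → ℝ)
    (hrstar : ∀ x, rstar x = Real.log (pc x / pu x) + Real.log (1 / lam))
    (r : X → ℝ) (hrm : Measurable r) :
    ((∫⁻ x, ENNReal.ofReal (pc x * (-(Real.log (_root_.sigmoid (rstar x))))) ∂μ
        + ENNReal.ofReal lam *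
          ∫⁻ x, ENNReal.ofReal (pu x * (-(Real.log (_root_.sigmoid (-rstar x))))) ∂μ)
      ≤ (∫⁻ x, ENNReal.ofReal (pc x * (-(Real.log (_root_.sigmoid (r x))))) ∂μ
        + ENNReal.ofReal lam *
          ∫⁻ x, ENNReal.ofReal (pu x * (-(Real.log (_root_.sigmoid (-r x))))) ∂μ)) ∧
      (((∫⁻ x, ENNReal.ofReal (pc x * (-(Real.log (_root_.sigmoid (r x))))) ∂μ
        + ENNReal.ofReal lam *
          ∫⁻ x, ENNReal.ofReal (pu x * (-(Real.log (_root_.sigmoid (-r x))))) ∂μ)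
      = (∫⁻ x, ENNReal.ofReal (pc x * (-(Real.log (_root_.sigmoid (rstar x))))) ∂μ
        + ENNReal.ofReal lam *
          ∫⁻ x, ENNReal.ofReal (pu x * (-(Real.log (_root_.sigmoid (-rstar x))))) ∂μ)) →
        r =ᵐ[μ] rstar) :=
  cca_optimal_reward_general μ pc pu hpcm hpum hpcpos hpupos hpci hpui lam hlam rstar hrstar r hrm
end

section
/- Let p_c and p_u be probability densities on ℝ^d (with respect to Lebesgue measure), let k : ℝ^d × ℝ^d → ℝ be a measurable positive transition kernel with y ↦ k(y,x) differentiable, and define the noisy marginals q_c(y) = ∫ p_c(x) k(y, x) dx and q_u(y) = ∫ p_u(x) k(y, x) dx, assumed strictly positive. Let g(y, x) = ∇_y log k(y, x), and assume that for (Lebesgue-)a.e. y the score identities ∇ log q_c(y) = ∫ (p_c(x)k(y,x)/q_c(y)) g(y,x) dx and ∇ log q_u(y) = ∫ (p_u(x)k(y,x)/q_u(y)) g(y,x) dx hold, with ∫∫ ‖g(y,x)‖² p_c(x)k(y,x) dx dy < ∞ and ∫∫ (q_c(y)/q_u(y))‖g(y,x)‖² p_u(x)k(y,x) dx dy < ∞.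 Let η ≥ 0 and define, for measurable s : ℝ^d → ℝ^d with ∫ q_c(y)‖s(y)‖² dy < ∞, J(s) = (1+η)∫∫ ‖g(y,x) − s(y)‖² p_c(x) k(y,x) dx dy − η ∫∫ (q_c(y)/q_u(y)) ‖g(y,x) − s(y)‖² p_u(x) k(y,x) dx dy, and define s_cfg(y) = (1+η)∇log q_c(y) − η∇log q_u(y). Then J(s) − J(s_cfg) = ∫ q_c(y) ‖s(y) − s_cfg(y)‖² dy ≥ 0; in particular s_cfg minimizes J, uniquely up to modification on a q_c-null set. -/
/-!
For fixed `y`, `ρ y x = p(x) k(y, x)` is an unnormalised posterior of mass `q(y)`, and the score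
identity says that `∇ log q(y)` is the posterior mean of the transition score `g(y, ·)`. Expanding
the square therefore gives `∫ ρ ‖g - v‖² = ∫ ρ ‖g‖² - 2 q ⟪∇ log q, v⟫ + q ‖v‖²`; the weight
`q_c / q_u` gives the unconditional term the same mass `q_c`. As the coefficients `1 + η` and `-η`
sum to one, the `v`-dependent parts of `J` combine into `q_c ‖v‖² - 2 q_c ⟪s_cfg, v⟫`, so
`J t - J s_cfg = ∫ q_c ‖t - s_cfg‖²`.
-/

open MeasureTheory Real
open scoped RealInnerProductSpace

section ParametricGradient

variable {α E : Type*} [MeasurableSpace α] [NormedAddCommGroup E]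

theorem measurable_fderiv_apply_of_differentiableAt [NormedSpace ℝ E]
    {F : Type*} [NormedAddCommGroup F] [NormedSpace ℝ F] [MeasurableSpace F] [BorelSpace F]
    [SecondCountableTopology F] {f : α → E → F} {y : E}
    (hf : ∀ z, Measurable fun a => f a z) (hd : ∀ a, DifferentiableAt ℝ (f a) y) (v : E) :
    Measurable fun a => fderiv ℝ (f a) y v := by
  have hn : Filter.Tendsto (fun n : ℕ => ‖(n : ℝ)‖) Filter.atTop Filter.atTop := by
    simpa only [Real.norm_natCast] using tendsto_natCast_atTop_atTop
  exact measurable_of_tendsto_metrizable (fun n => ((hf _).sub (hf y)).const_smul (n : ℝ))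
    (tendsto_pi_nhds.2 fun a => (hd a).hasFDerivAt.lim v hn)

variable [InnerProductSpace ℝ E] [MeasurableSpace E] [BorelSpace E]

theorem measurable_gradient_of_differentiableAt [FiniteDimensional ℝ E]
    {f : α → E → ℝ} {y : E}
    (hf : ∀ z, Measurable fun a => f a z) (hd : ∀ a, DifferentiableAt ℝ (f a) y) :
    Measurable fun a => gradient (f a) y := by
  let b := stdOrthonormalBasis ℝ E
  have hb : ∀ a, gradient (f a) y = ∑ i, fderiv ℝ (f a) y (b i) • b i := fun a => by
    conv_lhs => rw [← b.sum_repr' (gradient (f a) y)]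
    refine Finset.sum_congr rfl fun i _ => ?_
    rw [real_inner_comm, gradient, InnerProductSpace.toDual_symm_apply]
  simp_rw [hb]
  exact Finset.measurable_sum _ fun i _ =>
    (measurable_fderiv_apply_of_differentiableAt hf hd _).smul_const _

theorem measurable_gradient [CompleteSpace E] (f : E → ℝ) : Measurable (gradient f) :=
  (InnerProductSpace.toDual ℝ E).symm.continuous.measurable.comp (measurable_fderiv ℝ f)

end ParametricGradient

section WeightedSquare

variable {α E : Type*} [MeasurableSpace α] {μ : Measure α} [NormedAddCommGroup E]

theorem ae_eq_withDensity_of_integral_mul_norm_sub_sq_eq_zero {w : α → ℝ} {s t : α → E}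
    (hw : Measurable w) (hw0 : ∀ x, 0 ≤ w x)
    (hi : Integrable (fun x => w x * ‖s x - t x‖ ^ 2) μ)
    (h : ∫ x, w x * ‖s x - t x‖ ^ 2 ∂μ = 0) :
    s =ᵐ[μ.withDensity fun x => ENNReal.ofReal (w x)] t := by
  have h0 := (integral_eq_zero_iff_of_nonneg (fun x => mul_nonneg (hw0 x) (sq_nonneg _)) hi).1 h
  refine (ae_withDensity_iff hw.ennreal_ofReal).2 ?_
  filter_upwards [h0] with x hx hwx
  have hwx' : w x ≠ 0 := (ENNReal.ofReal_pos.1 (pos_iff_ne_zero.2 hwx)).ne'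
  simpa [hwx', sub_eq_zero] using hx

variable [InnerProductSpace ℝ E]

theorem integrable_mul_inner {w : α → ℝ} {s t : α → E} (hw : AEStronglyMeasurable w μ)
    (hs : AEStronglyMeasurable s μ) (ht : AEStronglyMeasurable t μ)
    (hs2 : Integrable (fun x => w x * ‖s x‖ ^ 2) μ)
    (ht2 : Integrable (fun x => w x * ‖t x‖ ^ 2) μ) :
    Integrable (fun x => w x * ⟪s x, t x⟫) μ := by
  refine ((hs2.norm.add ht2.norm).div_const 2).mono' (hw.mul (hs.inner ht))
    (.of_forall fun x => ?_)
  have hst := abs_real_inner_le_norm (s x) (t x)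
  simp only [Pi.add_apply, norm_mul, Real.norm_eq_abs, abs_pow, abs_norm]
  nlinarith [mul_le_mul_of_nonneg_left hst (abs_nonneg (w x)),
    mul_nonneg (abs_nonneg (w x)) (sq_nonneg (‖s x‖ - ‖t x‖))]

theorem integrable_mul_norm_sub_sq {w : α → ℝ} {s t : α → E} (hw : AEStronglyMeasurable w μ)
    (hs : AEStronglyMeasurable s μ) (ht : AEStronglyMeasurable t μ)
    (hs2 : Integrable (fun x => w x * ‖s x‖ ^ 2) μ)
    (ht2 : Integrable (fun x => w x * ‖t x‖ ^ 2) μ) :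
    Integrable (fun x => w x * ‖s x - t x‖ ^ 2) μ := by
  refine ((hs2.sub ((integrable_mul_inner hw hs ht hs2 ht2).const_mul 2)).add ht2).congr
    (.of_forall fun x => ?_)
  simp only [Pi.add_apply, Pi.sub_apply]
  rw [norm_sub_sq_real]
  ring

theorem integrable_mul_norm_smul_sq {w : α → ℝ} {s : α → E}
    (hs2 : Integrable (fun x => w x * ‖s x‖ ^ 2) μ) (a : ℝ) :
    Integrable (fun x => w x * ‖a • s x‖ ^ 2) μ :=
  (hs2.const_mul (a ^ 2)).congr (.of_forall fun x => by
    simp only [norm_smul, mul_pow, Real.norm_eq_abs, sq_abs]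
    ring)

theorem integrable_smul_of_integrable_mul_norm_sq {ρ : α → ℝ} {g : α → E}
    (hρ : Integrable ρ μ) (hg : AEStronglyMeasurable g μ)
    (hρg : Integrable (fun x => ρ x * ‖g x‖ ^ 2) μ) :
    Integrable (fun x => ρ x • g x) μ := by
  refine ((hρ.norm.add hρg.norm).div_const 2).mono' (hρ.1.smul hg) (.of_forall fun x => ?_)
  simp only [Pi.add_apply, norm_smul, norm_mul, Real.norm_eq_abs, abs_pow, abs_norm]
  nlinarith [mul_nonneg (abs_nonneg (ρ x)) (sq_nonneg (‖g x‖ - 1))]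

theorem integral_mul_norm_sub_sq [CompleteSpace E] {ρ : α → ℝ} {g : α → E}
    (hρ : Integrable ρ μ) (hg : AEStronglyMeasurable g μ)
    (hρg : Integrable (fun x => ρ x * ‖g x‖ ^ 2) μ) (v : E) :
    ∫ x, ρ x * ‖g x - v‖ ^ 2 ∂μ
      = ∫ x, ρ x * ‖g x‖ ^ 2 ∂μ - 2 * ⟪∫ x, ρ x • g x ∂μ, v⟫ + (∫ x, ρ x ∂μ) * ‖v‖ ^ 2 := by
  have hρg' := integrable_smul_of_integrable_mul_norm_sq hρ hg hρg
  have hinner : Integrable (fun x => ⟪v, ρ x • g x⟫) μ := by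
    simpa only [real_inner_comm v] using hρg'.inner_const (𝕜 := ℝ) v
  calc ∫ x, ρ x * ‖g x - v‖ ^ 2 ∂μ
      = ∫ x, ρ x * ‖g x‖ ^ 2 - 2 * ⟪v, ρ x • g x⟫ + ρ x * ‖v‖ ^ 2 ∂μ := by
        refine integral_congr_ae (.of_forall fun x => ?_)
        simp only
        rw [norm_sub_sq_real, real_inner_smul_right, real_inner_comm]
        ring
    _ = _ := by
        have h1 : Integrable (fun x => ρ x * ‖g x‖ ^ 2 - 2 * ⟪v, ρ x • g x⟫) μ :=
          hρg.sub (hinner.const_mul 2)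
        rw [integral_add h1 (hρ.mul_const _),
          integral_sub hρg (hinner.const_mul 2), integral_const_mul, integral_mul_const,
          integral_inner hρg', real_inner_comm]

theorem integral_smul_eq_smul_of_eq_integral_div_smul [CompleteSpace E] {ρ : α → ℝ} {g : α → E}
    {q : ℝ} {S : E} (hq : q ≠ 0) (hS : S = ∫ x, (ρ x / q) • g x ∂μ) :
    ∫ x, ρ x • g x ∂μ = q • S := by
  rw [hS, ← integral_smul]
  simp_rw [smul_smul, mul_div_cancel₀ _ hq]

end WeightedSquare

section PosteriorMean

variable {α β E : Type*} [MeasurableSpace α] [MeasurableSpace β] {μ : Measure α} {ν : Measure β}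
  [NormedAddCommGroup E] [InnerProductSpace ℝ E]

/-- `ρ y / q y` is a posterior density given `y`, and `S y` the posterior mean of `g y`. -/
structure IsPosteriorMean (ν : Measure β) (μ : Measure α) (ρ : β → α → ℝ) (g : β → α → E)
    (q : β → ℝ) (S : β → E) : Prop where
  nonneg : ∀ y x, 0 ≤ ρ y x
  integrable : ∀ y, Integrable (ρ y) μ
  integral_eq : ∀ y, ∫ x, ρ y x ∂μ = q y
  aestronglyMeasurable_marginal : AEStronglyMeasurable q ν
  aestronglyMeasurable_mean : AEStronglyMeasurable S ν
  aestronglyMeasurable_fun : ∀ y, AEStronglyMeasurable (g y) μ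
  integrable_prod : Integrable (fun z : β × α => ρ z.1 z.2 * ‖g z.1 z.2‖ ^ 2) (ν.prod μ)
  integral_smul_eq : ∀ᵐ y ∂ν, ∫ x, ρ y x • g y x ∂μ = q y • S y

noncomputable def weightedSqLoss (ν : Measure β) (μ : Measure α) (ρ : β → α → ℝ) (g : β → α → E)
    (t : β → E) : ℝ :=
  ∫ y, ∫ x, ρ y x * ‖g y x - t y‖ ^ 2 ∂μ ∂ν

namespace IsPosteriorMean

variable [CompleteSpace E] {ρ : β → α → ℝ} {g : β → α → E} {q : β → ℝ} {S : β → E}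

theorem of_eq_integral_div_smul {ρ₀ : β → α → ℝ} {w r : β → ℝ} (hρ0 : ∀ y x, 0 ≤ ρ y x)
    (hρ : ∀ y x, ρ y x = w y * ρ₀ y x) (hr : ∀ y, r y = ∫ x, ρ₀ y x ∂μ) (hr0 : ∀ y, r y ≠ 0)
    (hq : ∀ y, w y * r y = q y) (hqm : AEStronglyMeasurable q ν)
    (hSm : AEStronglyMeasurable S ν) (hg : ∀ y, AEStronglyMeasurable (g y) μ)
    (hi : Integrable (fun z : β × α => ρ z.1 z.2 * ‖g z.1 z.2‖ ^ 2) (ν.prod μ))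
    (hS : ∀ᵐ y ∂ν, S y = ∫ x, (ρ₀ y x / r y) • g y x ∂μ) :
    IsPosteriorMean ν μ ρ g q S where
  nonneg := hρ0
  integrable y := by
    rw [funext (hρ y)]
    exact (Integrable.of_integral_ne_zero (hr y ▸ hr0 y)).const_mul _
  integral_eq y := by
    rw [funext (hρ y), integral_const_mul, ← hr, hq]
  aestronglyMeasurable_marginal := hqm
  aestronglyMeasurable_mean := hSm
  aestronglyMeasurable_fun := hg
  integrable_prod := hi
  integral_smul_eq := by
    filter_upwards [hS] with y hy
    simp_rw [hρ y, mul_smul]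
    rw [integral_smul, integral_smul_eq_smul_of_eq_integral_div_smul (hr0 y) hy, smul_smul, hq]

variable [SFinite μ] [SFinite ν]

theorem integral_mul_norm_sub_sq (h : IsPosteriorMean ν μ ρ g q S) :
    ∀ᵐ y ∂ν, ∀ v, ∫ x, ρ y x * ‖g y x - v‖ ^ 2 ∂μ
      = ∫ x, ρ y x * ‖g y x‖ ^ 2 ∂μ - 2 * (q y * ⟪S y, v⟫) + q y * ‖v‖ ^ 2 := by
  filter_upwards [h.integrable_prod.prod_right_ae, h.integral_smul_eq] with y hy hS v
  rw [_root_.integral_mul_norm_sub_sq (h.integrable y) (h.aestronglyMeasurable_fun y) hy, hS,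
    h.integral_eq, real_inner_smul_left]

/-- `q ‖S‖² ≤ ∫ ρ ‖g‖²` since `∫ ρ ‖g - S‖² ≥ 0`. -/
theorem integrable_mul_norm_sq (h : IsPosteriorMean ν μ ρ g q S) :
    Integrable (fun y => q y * ‖S y‖ ^ 2) ν := by
  refine h.integrable_prod.integral_prod_left.mono'
    (h.aestronglyMeasurable_marginal.mul (h.aestronglyMeasurable_mean.norm.pow 2)) ?_
  filter_upwards [h.integral_mul_norm_sub_sq] with y hy
  have hvar : 0 ≤ ∫ x, ρ y x * ‖g y x - S y‖ ^ 2 ∂μ :=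
    integral_nonneg fun x => mul_nonneg (h.nonneg y x) (sq_nonneg _)
  have hq0 : 0 ≤ q y := h.integral_eq y ▸ integral_nonneg (h.nonneg y)
  rw [hy, real_inner_self_eq_norm_sq] at hvar
  rw [Real.norm_of_nonneg (by positivity)]
  linarith

theorem integrable_integral_mul_norm_sub_sq (h : IsPosteriorMean ν μ ρ g q S) {t : β → E}
    (ht : AEStronglyMeasurable t ν) (ht2 : Integrable (fun y => q y * ‖t y‖ ^ 2) ν) :
    Integrable (fun y => ∫ x, ρ y x * ‖g y x - t y‖ ^ 2 ∂μ) ν := by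
  have hcross := integrable_mul_inner h.aestronglyMeasurable_marginal
    h.aestronglyMeasurable_mean ht h.integrable_mul_norm_sq ht2
  refine ((h.integrable_prod.integral_prod_left.sub (hcross.const_mul 2)).add ht2).congr ?_
  filter_upwards [h.integral_mul_norm_sub_sq] with y hy
  exact (hy (t y)).symm

theorem integrable_mul_norm_smul_sub_smul_sq {ρ₁ ρ₂ : β → α → ℝ} {g₁ g₂ : β → α → E}
    {S₁ S₂ : β → E} (h₁ : IsPosteriorMean ν μ ρ₁ g₁ q S₁) (h₂ : IsPosteriorMean ν μ ρ₂ g₂ q S₂)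
    (a b : ℝ) :
    Integrable (fun y => q y * ‖a • S₁ y - b • S₂ y‖ ^ 2) ν :=
  integrable_mul_norm_sub_sq h₁.aestronglyMeasurable_marginal
    (h₁.aestronglyMeasurable_mean.fun_const_smul a) (h₂.aestronglyMeasurable_mean.fun_const_smul b)
    (integrable_mul_norm_smul_sq h₁.integrable_mul_norm_sq a)
    (integrable_mul_norm_smul_sq h₂.integrable_mul_norm_sq b)

theorem affine_weightedSqLoss_sub {ρ₁ ρ₂ : β → α → ℝ} {S₁ S₂ : β → E}
    (h₁ : IsPosteriorMean ν μ ρ₁ g q S₁) (h₂ : IsPosteriorMean ν μ ρ₂ g q S₂)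
    {a b : ℝ} (hab : a - b = 1) {s t : β → E}
    (hs : AEStronglyMeasurable s ν) (hs2 : Integrable (fun y => q y * ‖s y‖ ^ 2) ν)
    (ht : AEStronglyMeasurable t ν) (ht2 : Integrable (fun y => q y * ‖t y‖ ^ 2) ν)
    (hSt : ∀ y, t y = a • S₁ y - b • S₂ y) :
    (a * weightedSqLoss ν μ ρ₁ g s - b * weightedSqLoss ν μ ρ₂ g s)
      - (a * weightedSqLoss ν μ ρ₁ g t - b * weightedSqLoss ν μ ρ₂ g t)
      = ∫ y, q y * ‖s y - t y‖ ^ 2 ∂ν := by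
  have I₁s := h₁.integrable_integral_mul_norm_sub_sq hs hs2
  have I₁t := h₁.integrable_integral_mul_norm_sub_sq ht ht2
  have I₂s := h₂.integrable_integral_mul_norm_sub_sq hs hs2
  have I₂t := h₂.integrable_integral_mul_norm_sub_sq ht ht2
  have D₁ : Integrable (fun y => ∫ x, ρ₁ y x * ‖g y x - s y‖ ^ 2 ∂μ
      - ∫ x, ρ₁ y x * ‖g y x - t y‖ ^ 2 ∂μ) ν := I₁s.sub I₁t
  have D₂ : Integrable (fun y => ∫ x, ρ₂ y x * ‖g y x - s y‖ ^ 2 ∂μ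
      - ∫ x, ρ₂ y x * ‖g y x - t y‖ ^ 2 ∂μ) ν := I₂s.sub I₂t
  calc _ = a * ∫ y, (∫ x, ρ₁ y x * ‖g y x - s y‖ ^ 2 ∂μ - ∫ x, ρ₁ y x * ‖g y x - t y‖ ^ 2 ∂μ) ∂ν
        - b * ∫ y, (∫ x, ρ₂ y x * ‖g y x - s y‖ ^ 2 ∂μ
          - ∫ x, ρ₂ y x * ‖g y x - t y‖ ^ 2 ∂μ) ∂ν := by
        rw [integral_sub I₁s I₁t, integral_sub I₂s I₂t, weightedSqLoss, weightedSqLoss,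
          weightedSqLoss, weightedSqLoss]
        ring
    _ = ∫ y, a * (∫ x, ρ₁ y x * ‖g y x - s y‖ ^ 2 ∂μ - ∫ x, ρ₁ y x * ‖g y x - t y‖ ^ 2 ∂μ)
        - b * (∫ x, ρ₂ y x * ‖g y x - s y‖ ^ 2 ∂μ - ∫ x, ρ₂ y x * ‖g y x - t y‖ ^ 2 ∂μ) ∂ν := by
        rw [integral_sub (D₁.const_mul a) (D₂.const_mul b), integral_const_mul,
          integral_const_mul]
    _ = ∫ y, q y * ‖s y - t y‖ ^ 2 ∂ν := by
        refine integral_congr_ae ?_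
        filter_upwards [h₁.integral_mul_norm_sub_sq, h₂.integral_mul_norm_sub_sq] with y e₁ e₂
        rw [e₁, e₁, e₂, e₂, hSt]
        obtain rfl : a = b + 1 := by linarith
        simp only [← real_inner_self_eq_norm_sq, inner_sub_left, inner_sub_right,
          real_inner_smul_left, real_inner_smul_right, real_inner_comm (S₁ y),
          real_inner_comm (S₂ y) (s y)]
        ring

end IsPosteriorMean

end PosteriorMean

theorem cfg_equals_weighted_mclr_general {d : ℕ}
    (pc pu : EuclideanSpace ℝ (Fin d) → ℝ)
    (hpcm : Measurable pc)
    (hpc0 : ∀ x, 0 ≤ pc x) (hpu0 : ∀ x, 0 ≤ pu x)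
    (k : EuclideanSpace ℝ (Fin d) → EuclideanSpace ℝ (Fin d) → ℝ)
    (hkm : Measurable (fun z : EuclideanSpace ℝ (Fin d) × EuclideanSpace ℝ (Fin d) => k z.1 z.2))
    (hkpos : ∀ y x, 0 < k y x)
    (hkdiff : ∀ x, Differentiable ℝ (fun y => k y x))
    (qc qu : EuclideanSpace ℝ (Fin d) → ℝ)
    (hqc : ∀ y, qc y = ∫ x, pc x * k y x) (hqu : ∀ y, qu y = ∫ x, pu x * k y x)
    (hqcpos : ∀ y, 0 < qc y) (hqupos : ∀ y, 0 < qu y)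
    (g : EuclideanSpace ℝ (Fin d) → EuclideanSpace ℝ (Fin d) → EuclideanSpace ℝ (Fin d))
    (hg : ∀ y x, g y x = gradient (fun y' => Real.log (k y' x)) y)
    (hscore_c : ∀ᵐ y ∂volume, gradient (fun y' => Real.log (qc y')) y
      = ∫ x, (pc x * k y x / qc y) • g y x)
    (hscore_u : ∀ᵐ y ∂volume, gradient (fun y' => Real.log (qu y')) y
      = ∫ x, (pu x * k y x / qu y) • g y x)
    (hg_sq_c : Integrable
      (fun z : EuclideanSpace ℝ (Fin d) × EuclideanSpace ℝ (Fin d) =>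
        pc z.2 * k z.1 z.2 * ‖g z.1 z.2‖ ^ 2) (volume.prod volume))
    (hg_sq_u : Integrable
      (fun z : EuclideanSpace ℝ (Fin d) × EuclideanSpace ℝ (Fin d) =>
        (qc z.1 / qu z.1) * (pu z.2 * k z.1 z.2) * ‖g z.1 z.2‖ ^ 2) (volume.prod volume))
    (η : ℝ)
    (J : (EuclideanSpace ℝ (Fin d) → EuclideanSpace ℝ (Fin d)) → ℝ)
    (hJ : ∀ t, J t
      = (1 + η) * (∫ y, ∫ x, pc x * k y x * ‖g y x - t y‖ ^ 2)
        - η * ∫ y, ∫ x, (qc y / qu y) * (pu x * k y x) * ‖g y x - t y‖ ^ 2)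
    (scfg : EuclideanSpace ℝ (Fin d) → EuclideanSpace ℝ (Fin d))
    (hscfg : ∀ y, scfg y
      = (1 + η) • gradient (fun y' => Real.log (qc y')) y
        - η • gradient (fun y' => Real.log (qu y')) y)
    (s : EuclideanSpace ℝ (Fin d) → EuclideanSpace ℝ (Fin d))
    (hsm : Measurable s)
    (hs_sq : Integrable (fun y => qc y * ‖s y‖ ^ 2)) :
    (J s - J scfg = ∫ y, qc y * ‖s y - scfg y‖ ^ 2) ∧
      (0 ≤ ∫ y, qc y * ‖s y - scfg y‖ ^ 2) ∧
      (J s = J scfg → s =ᵐ[volume.withDensity fun y => ENNReal.ofReal (qc y)] scfg) := by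
  have hqcm : Measurable qc := by
    rw [funext hqc]
    exact ((hpcm.comp measurable_snd).mul hkm).stronglyMeasurable.integral_prod_right'.measurable
  have hgm : ∀ y, Measurable (g y) := fun y => by
    simp_rw [funext (hg y)]
    exact measurable_gradient_of_differentiableAt
      (fun z => measurable_log.comp (hkm.comp measurable_prodMk_left))
      (fun x => (hkdiff x y).log (hkpos y x).ne')
  have hk0 : ∀ y x, 0 ≤ k y x := fun y x => (hkpos y x).le
  have hc : IsPosteriorMean volume volume (fun y x => pc x * k y x) g qc
      (fun y => gradient (fun y' => Real.log (qc y')) y) :=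
    .of_eq_integral_div_smul (w := fun _ => 1) (fun y x => mul_nonneg (hpc0 x) (hk0 y x))
      (fun _ _ => (one_mul _).symm) hqc (fun y => (hqcpos y).ne') (fun _ => one_mul _)
      hqcm.aestronglyMeasurable (measurable_gradient _).aestronglyMeasurable
      (fun y => (hgm y).aestronglyMeasurable) hg_sq_c hscore_c
  have hu : IsPosteriorMean volume volume (fun y x => qc y / qu y * (pu x * k y x)) g qc
      (fun y => gradient (fun y' => Real.log (qu y')) y) :=
    .of_eq_integral_div_smul (fun y x => mul_nonneg (div_pos (hqcpos y) (hqupos y)).le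
        (mul_nonneg (hpu0 x) (hk0 y x))) (fun _ _ => rfl) hqu (fun y => (hqupos y).ne')
      (fun y => div_mul_cancel₀ _ (hqupos y).ne') hqcm.aestronglyMeasurable
      (measurable_gradient _).aestronglyMeasurable (fun y => (hgm y).aestronglyMeasurable)
      hg_sq_u hscore_u
  have hscfgm : AEStronglyMeasurable scfg volume := by
    rw [funext hscfg]
    exact (hc.aestronglyMeasurable_mean.fun_const_smul _).fun_sub
      (hu.aestronglyMeasurable_mean.fun_const_smul _)
  have hscfg_sq : Integrable fun y => qc y * ‖scfg y‖ ^ 2 := by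
    simpa only [hscfg] using hc.integrable_mul_norm_smul_sub_smul_sq hu (1 + η) η
  have hmain : J s - J scfg = ∫ y, qc y * ‖s y - scfg y‖ ^ 2 := by
    rw [hJ, hJ]
    exact hc.affine_weightedSqLoss_sub hu (by ring) hsm.aestronglyMeasurable hs_sq hscfgm
      hscfg_sq hscfg
  refine ⟨hmain, integral_nonneg fun y => mul_nonneg (hqcpos y).le (sq_nonneg _), fun hJeq => ?_⟩
  exact ae_eq_withDensity_of_integral_mul_norm_sub_sq_eq_zero hqcm (fun y => (hqcpos y).le)
    (integrable_mul_norm_sub_sq hqcm.aestronglyMeasurable hsm.aestronglyMeasurable hscfgm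
      hs_sq hscfg_sq)
    (by rw [← hmain, hJeq, sub_self])

/-- **Paper's Theorem 3 (equivalence of classifier-free guidance and weighted MCLR),
at a fixed time and condition.**  With class-conditional data density `p_c`,
unconditional data density `p_u`, positive transition kernel `k`, noisy marginals
`q_c y = ∫ p_c x · k y x dx` and `q_u y = ∫ p_u x · k y x dx` (strictly positive),
transition score `g y x = ∇_y log k y x`, and the a.e. score identities
`∇ log q_c = E_{posterior}[g]`, `∇ log q_u = E_{posterior}[g]` together with the stated
square-integrability conditions, the sample-adaptively weighted MCLR objective
`J s = (1+η) ∬ ‖g − s‖² p_c k − η ∬ (q_c/q_u) ‖g − s‖² p_u k`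
satisfies `J s − J s_cfg = ∫ q_c ‖s − s_cfg‖² ≥ 0` for the CFG-guided score
`s_cfg = (1+η) ∇log q_c − η ∇log q_u`; in particular `s_cfg` minimizes `J`, uniquely up
to modification on a `q_c`-null set. -/
theorem cfg_equals_weighted_mclr {d : ℕ}
    (pc pu : EuclideanSpace ℝ (Fin d) → ℝ)
    (hpcm : Measurable pc) (hpum : Measurable pu)
    (hpc0 : ∀ x, 0 ≤ pc x) (hpu0 : ∀ x, 0 ≤ pu x)
    (hpci : Integrable pc) (hpui : Integrable pu)
    (hpc1 : ∫ x, pc x = 1) (hpu1 : ∫ x, pu x = 1)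
    (k : EuclideanSpace ℝ (Fin d) → EuclideanSpace ℝ (Fin d) → ℝ)
    (hkm : Measurable (fun z : EuclideanSpace ℝ (Fin d) × EuclideanSpace ℝ (Fin d) => k z.1 z.2))
    (hkpos : ∀ y x, 0 < k y x)
    (hkdiff : ∀ x, Differentiable ℝ (fun y => k y x))
    (qc qu : EuclideanSpace ℝ (Fin d) → ℝ)
    (hqc : ∀ y, qc y = ∫ x, pc x * k y x) (hqu : ∀ y, qu y = ∫ x, pu x * k y x)
    (hqcpos : ∀ y, 0 < qc y) (hqupos : ∀ y, 0 < qu y)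
    (g : EuclideanSpace ℝ (Fin d) → EuclideanSpace ℝ (Fin d) → EuclideanSpace ℝ (Fin d))
    (hg : ∀ y x, g y x = gradient (fun y' => Real.log (k y' x)) y)
    (hscore_c : ∀ᵐ y ∂volume, gradient (fun y' => Real.log (qc y')) y
      = ∫ x, (pc x * k y x / qc y) • g y x)
    (hscore_u : ∀ᵐ y ∂volume, gradient (fun y' => Real.log (qu y')) y
      = ∫ x, (pu x * k y x / qu y) • g y x)
    (hg_sq_c : Integrable
      (fun z : EuclideanSpace ℝ (Fin d) × EuclideanSpace ℝ (Fin d) =>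
        pc z.2 * k z.1 z.2 * ‖g z.1 z.2‖ ^ 2) (volume.prod volume))
    (hg_sq_u : Integrable
      (fun z : EuclideanSpace ℝ (Fin d) × EuclideanSpace ℝ (Fin d) =>
        (qc z.1 / qu z.1) * (pu z.2 * k z.1 z.2) * ‖g z.1 z.2‖ ^ 2) (volume.prod volume))
    (η : ℝ) (hη : 0 ≤ η)
    (J : (EuclideanSpace ℝ (Fin d) → EuclideanSpace ℝ (Fin d)) → ℝ)
    (hJ : ∀ t, J t
      = (1 + η) * (∫ y, ∫ x, pc x * k y x * ‖g y x - t y‖ ^ 2)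
        - η * ∫ y, ∫ x, (qc y / qu y) * (pu x * k y x) * ‖g y x - t y‖ ^ 2)
    (scfg : EuclideanSpace ℝ (Fin d) → EuclideanSpace ℝ (Fin d))
    (hscfg : ∀ y, scfg y
      = (1 + η) • gradient (fun y' => Real.log (qc y')) y
        - η • gradient (fun y' => Real.log (qu y')) y)
    (s : EuclideanSpace ℝ (Fin d) → EuclideanSpace ℝ (Fin d))
    (hsm : Measurable s)
    (hs_sq : Integrable (fun y => qc y * ‖s y‖ ^ 2)) :
    (J s - J scfg = ∫ y, qc y * ‖s y - scfg y‖ ^ 2) ∧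
      (0 ≤ ∫ y, qc y * ‖s y - scfg y‖ ^ 2) ∧
      (J s = J scfg → s =ᵐ[volume.withDensity fun y => ENNReal.ofReal (qc y)] scfg) :=
  cfg_equals_weighted_mclr_general pc pu hpcm hpc0 hpu0 k hkm hkpos hkdiff qc qu hqc hqu hqcpos
    hqupos g hg hscore_c hscore_u hg_sq_c hg_sq_u η J hJ scfg hscfg s hsm hs_sq
end
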